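/- arXiv:2305.07098 — 3 statements merged into one kernel-verified Lean document; each statement's English description precedes it below -/
import Mathlib

section
/- Let n ≥ 1 and let w ∈ ℤ with w < −n. Then for all x, y, z ∈ {0,1}^n: f_{−n}(x,y) ≤ f_{−n}(y,z) if and only if f_w(x,y) ≤ f_w(y,z). -/
open scoped Classical BigOperators ENNReal

noncomputable section

/-- Bitstrings of length `n`. -/
abbrev BitStr (n : ℕ) := Fin n → Bool

/-- The number of one-bits of a bitstring. -/
def ones {n : ℕ} (x : BitStr n) : ℕ := (Finset.univ.filter fun i => x i = true).card

/-- The number of zero-bits of a bitstring. -/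
def zeros {n : ℕ} (x : BitStr n) : ℕ := (Finset.univ.filter fun i => x i = false).card

/-- The first bit of a bitstring (`false` if `n = 0`). -/
def firstBit {n : ℕ} (x : BitStr n) : Bool := if h : 0 < n then x ⟨0, h⟩ else false

/-- The number of one-bits among the last `n-1` positions. -/
def onesTail {n : ℕ} (x : BitStr n) : ℕ :=
  (Finset.univ.filter fun i : Fin n => x i = true ∧ (i : ℕ) ≠ 0).card

/-- The all-ones bitstring `1^n`. -/
def allOnes (n : ℕ) : BitStr n := fun _ => true

/-- The time-linkage OneMax function `f_w(x, y) = |y| + w·x₁`, where `x` is the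
previous solution and `y` is the current one. -/
def fW {n : ℕ} (w : ℤ) (x y : BitStr n) : ℤ :=
  (ones y : ℤ) + (if firstBit x then w else 0)

/-- States of the time-linkage algorithms: (previous solution, current solution). -/
abbrev TLState (n : ℕ) := BitStr n × BitStr n

/-- Hamming distance between two bitstrings. -/
def hamming {n : ℕ} (x y : BitStr n) : ℕ := (Finset.univ.filter fun i => x i ≠ y i).card

/-- Standard bit-wise mutation, flipping each bit independently with probability `1/n`:
`mutEA x y` is the probability that mutating `x` yields `y`. -/
def mutEA {n : ℕ} (x y : BitStr n) : ℝ :=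
  (1 / n : ℝ) ^ hamming x y * (1 - 1 / n) ^ (n - hamming x y)

/-- RLS mutation, flipping exactly one bit chosen uniformly at random:
`mutRLS x y` is the probability that mutating `x` yields `y`. -/
def mutRLS {n : ℕ} (x y : BitStr n) : ℝ :=
  if hamming x y = 1 then (1 / n : ℝ) else 0

/-- Transition matrix of the time-linkage (1+1)-type algorithm with mutation
distribution `m` on `f_w`: at state `(x', x)`, an offspring `y` sampled from
`m x ·` is accepted (the state moving to `(x, y)`) iff `f_w(x, y) ≥ f_w(x', x)`;
otherwise the state stays at `(x', x)`. -/
def tlTrans {n : ℕ} (m : BitStr n → BitStr n → ℝ) (w : ℤ) (s t : TLState n) : ℝ :=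
  (∑ y : BitStr n, if fW w s.1 s.2 ≤ fW w s.2 y ∧ t = (s.2, y) then m s.2 y else 0) +
    if t = s then ∑ y : BitStr n, if ¬ fW w s.1 s.2 ≤ fW w s.2 y then m s.2 y else 0 else 0

/-- Transition matrix of the time-linkage (1+1) EA on `f_w`. -/
def transEA {n : ℕ} (w : ℤ) : TLState n → TLState n → ℝ := tlTrans mutEA w

/-- Transition matrix of the time-linkage RLS on `f_w`. -/
def transRLS {n : ℕ} (w : ℤ) : TLState n → TLState n → ℝ := tlTrans mutRLS w

/-- Probability that the chain with transition matrix `P` started at `s`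
visits a state in `E` within the first `T` steps (including time 0). -/
def hitWithin {n : ℕ} (P : TLState n → TLState n → ℝ) (E : TLState n → Prop) :
    ℕ → TLState n → ℝ
  | 0, s => if E s then 1 else 0
  | T + 1, s => if E s then 1 else ∑ t : TLState n, P s t * hitWithin P E T t

/-- Probability that the chain started at `s` ever visits a state in `E`. -/
def hitProb {n : ℕ} (P : TLState n → TLState n → ℝ) (E : TLState n → Prop)
    (s : TLState n) : ℝ := ⨆ T : ℕ, hitWithin P E T s

/-- Probability that the chain started at `s` visits a state in `E` at some
time `≥ 1` (i.e. at a strictly later time). -/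
def hitProbLater {n : ℕ} (P : TLState n → TLState n → ℝ) (E : TLState n → Prop)
    (s : TLState n) : ℝ := ⨆ T : ℕ, ∑ t : TLState n, P s t * hitWithin P E T t

/-- Probability that the chain started at `s` visits `A` within `T` steps
without having visited `B` strictly before (`A` has priority on common states). -/
def raceWithin {n : ℕ} (P : TLState n → TLState n → ℝ) (A B : TLState n → Prop) :
    ℕ → TLState n → ℝ
  | 0, s => if A s then 1 else 0
  | T + 1, s =>
      if A s then 1 else if B s then 0 else ∑ t : TLState n, P s t * raceWithin P A B T t

/-- Probability that the chain started at `s` eventually visits `A` before `B`,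
i.e. reaches `A` without having visited `B` strictly before. -/
def raceProb {n : ℕ} (P : TLState n → TLState n → ℝ) (A B : TLState n → Prop)
    (s : TLState n) : ℝ := ⨆ T : ℕ, raceWithin P A B T s

/-- Probability that the chain started at `s` enters the set `A` within `T`
steps and at the first entrance time is in `E`. -/
def firstHitInWithin {n : ℕ} (P : TLState n → TLState n → ℝ) (A E : TLState n → Prop) :
    ℕ → TLState n → ℝ
  | 0, s => if A s then (if E s then 1 else 0) else 0
  | T + 1, s =>
      if A s then (if E s then 1 else 0)
      else ∑ t : TLState n, P s t * firstHitInWithin P A E T t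

/-- Probability that the chain started at `s` eventually enters the set `A`
and at the first entrance time is in `E`. -/
def firstHitInProb {n : ℕ} (P : TLState n → TLState n → ℝ) (A E : TLState n → Prop)
    (s : TLState n) : ℝ := ⨆ T : ℕ, firstHitInWithin P A E T s

/-- Expected hitting time of `E` for the chain started at `s` (in `ℝ≥0∞`),
via `E[τ] = ∑_{T ≥ 0} P[τ > T]`. -/
def expHitTime {n : ℕ} (P : TLState n → TLState n → ℝ) (E : TLState n → Prop)
    (s : TLState n) : ℝ≥0∞ := ∑' T : ℕ, ENNReal.ofReal (1 - hitWithin P E T s)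

/-- Probability that the chain started at `s` never visits a state in `B`. -/
def avoidProb {n : ℕ} (P : TLState n → TLState n → ℝ) (B : TLState n → Prop)
    (s : TLState n) : ℝ := 1 - hitProb P B s

/-- `E[τ_E · 1_{B is never visited}]` for the chain started at `s` (in `ℝ≥0∞`),
using `P[τ_E > T and B never visited] = P[B never visited] − P[E hit within T
steps, avoiding B]`, which is valid whenever `B` cannot be visited anymore once
`E` has been reached. -/
def expHitTimeAvoid {n : ℕ} (P : TLState n → TLState n → ℝ) (E B : TLState n → Prop)
    (s : TLState n) : ℝ≥0∞ :=
  ∑' T : ℕ, ENNReal.ofReal (avoidProb P B s - raceWithin P E B T s)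

/-- The global optimum for negative weight `w < 0`: the current solution is
`1^n` and the stored previous first bit is `0`. -/
def OptNeg {n : ℕ} (s : TLState n) : Prop := s.2 = allOnes n ∧ firstBit s.1 = false

/-- The global optimum for positive weight `w > 0`: the current solution is
`1^n` and the stored previous first bit is `1`. -/
def OptPos {n : ℕ} (s : TLState n) : Prop := s.2 = allOnes n ∧ firstBit s.1 = true

/-- Event I for the (1+1) EA (for `w < -1`): first bit pattern `(0,1)`,
current solution not `1^n`, and `|x_{[2..n]}| ≥ w + n`. -/
def EventIEA {n : ℕ} (w : ℤ) (s : TLState n) : Prop :=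
  firstBit s.1 = false ∧ firstBit s.2 = true ∧ s.2 ≠ allOnes n ∧
    w + n ≤ (onesTail s.2 : ℤ)

/-- Event I for the RLS (for `w < -1`): first bit pattern `(0,1)` and the
current solution is not `1^n`. -/
def EventIRLS {n : ℕ} (s : TLState n) : Prop :=
  firstBit s.1 = false ∧ firstBit s.2 = true ∧ s.2 ≠ allOnes n

/-- Event II: the current solution is `1^n` and the stored first bit is `1`. -/
def EventII {n : ℕ} (s : TLState n) : Prop :=
  firstBit s.1 = true ∧ s.2 = allOnes n

/-- Event III for the (1+1) EA (for `w > 0`): first bit pattern `(1,0)` and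
`|x_{[2..n]}| ≥ n - w + 1`. -/
def EventIIIEA {n : ℕ} (w : ℤ) (s : TLState n) : Prop :=
  firstBit s.1 = true ∧ firstBit s.2 = false ∧ (n : ℤ) - w + 1 ≤ (onesTail s.2 : ℤ)

/-- Event III for the RLS (for `w > 1`): first bit pattern `(1,0)`. -/
def EventIIIRLS {n : ℕ} (s : TLState n) : Prop :=
  firstBit s.1 = true ∧ firstBit s.2 = false

/-- Euler's number `e`. -/
def eu : ℝ := Real.exp 1

end

/-! For `w ≤ -n` a change of the stored first bit outweighs any change of `|y| ≤ n`, so `f_w`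
compares states lexicographically: first by the negated stored first bit, then by the number of
ones. That order does not depend on `w`. -/

lemma ones_le {n : ℕ} (x : BitStr n) : ones x ≤ n := by
  simpa [ones] using Finset.card_filter_le Finset.univ (fun i => x i = true)

lemma one_le_ones_of_firstBit {n : ℕ} {x : BitStr n} (h : firstBit x = true) : 1 ≤ ones x := by
  unfold firstBit at h
  split_ifs at h with hn
  exact Finset.card_pos.mpr ⟨⟨0, hn⟩, by simp [h]⟩

lemma fW_le_fW_iff_toLex_le {n : ℕ} {w : ℤ} (hw : w ≤ -(n : ℤ)) (x y z : BitStr n) :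
    fW w x y ≤ fW w y z ↔ toLex (!firstBit x, ones y) ≤ toLex (!firstBit y, ones z) := by
  have hy := ones_le y
  have hz := ones_le z
  have hy1 : firstBit y = true → 1 ≤ ones y := one_le_ones_of_firstBit
  rw [Prod.Lex.toLex_le_toLex]
  unfold fW
  cases firstBit x <;> cases hy1st : firstBit y <;> simp +decide [hy1st] at hy1 ⊢ <;> omega

theorem stmt3_general (n : ℕ) (w : ℤ) (hw : w < -(n : ℤ)) :
    ∀ x y z : BitStr n,
      (fW (-(n : ℤ)) x y ≤ fW (-(n : ℤ)) y z ↔ fW w x y ≤ fW w y z) := by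
  intro x y z
  rw [fW_le_fW_iff_toLex_le le_rfl, fW_le_fW_iff_toLex_le hw.le]

/-- For `w < -n`, the selection comparisons of `f_w` and of
`f_{-n}` coincide: for all `x, y, z`,
`f_{-n}(x,y) ≤ f_{-n}(y,z) ↔ f_w(x,y) ≤ f_w(y,z)`. -/
theorem stmt3 (n : ℕ) (hn : 1 ≤ n) (w : ℤ) (hw : w < -(n : ℤ)) :
    ∀ x y z : BitStr n,
      (fW (-(n : ℤ)) x y ≤ fW (-(n : ℤ)) y z ↔ fW w x y ≤ fW w y z) :=
  stmt3_general n w hw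
end

section
/- Let n ≥ 1 and let w ∈ ℤ with w > 1. Let x', x ∈ {0,1}^n satisfy x'_1 = 1 and x_1 = 0. Then for every y ∈ {0,1}^n obtained from x by flipping exactly one bit, one has f_w(x,y) < f_w(x',x). Consequently the state (x',x) is absorbing for the time-linkage RLS on f_w, so started from (x',x) the RLS never reaches the global optimum. -/
open scoped Classical BigOperators ENNReal

abbrev flipBit {n : ℕ} (x : BitStr n) (i : Fin n) : BitStr n := Function.update x i (!x i)

section Hamming

variable {n : ℕ}

lemma ones_le_ones_add_hamming (x y : BitStr n) : ones y ≤ ones x + hamming x y := by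
  unfold ones hamming
  refine (Finset.card_le_card fun i hi => ?_).trans (Finset.card_union_le _ _)
  by_cases h : x i = true <;> simp_all

lemma hamming_flipBit (x : BitStr n) (i : Fin n) : hamming x (flipBit x i) = 1 := by
  unfold hamming
  rw [Finset.card_eq_one]
  refine ⟨i, Finset.ext fun j => ?_⟩
  by_cases h : j = i
  · subst h; simp
  · simp [h]

lemma flipBit_injective (x : BitStr n) : Function.Injective (flipBit x) := by
  intro i j h
  by_contra hij
  have := congrFun h i
  simp only [flipBit] at this
  rw [Function.update_self, Function.update_of_ne hij] at this
  exact Bool.not_ne_self (x i) this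

lemma exists_eq_flipBit_of_hamming_eq_one {x y : BitStr n} (h : hamming x y = 1) :
    ∃ i, y = flipBit x i := by
  obtain ⟨i, hi⟩ := Finset.card_eq_one.mp h
  have hdiff : ∀ j, x j ≠ y j ↔ j = i := fun j => by
    simpa using Finset.ext_iff.mp hi j
  refine ⟨i, funext fun j => ?_⟩
  by_cases hj : j = i
  · subst hj
    have := (hdiff j).mpr rfl
    cases hxj : x j <;> cases hyj : y j <;> simp_all
  · rw [flipBit, Function.update_of_ne hj]
    exact (not_not.mp (mt (hdiff j).mp hj)).symm

lemma filter_hamming_eq_one (x : BitStr n) :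
    Finset.univ.filter (fun y => hamming x y = 1) = Finset.univ.image (flipBit x) := by
  ext y
  simp only [Finset.mem_filter, Finset.mem_univ, true_and, Finset.mem_image]
  constructor
  · intro h
    obtain ⟨i, rfl⟩ := exists_eq_flipBit_of_hamming_eq_one h
    exact ⟨i, rfl⟩
  · rintro ⟨i, rfl⟩
    exact hamming_flipBit x i

lemma card_filter_hamming_eq_one (x : BitStr n) :
    (Finset.univ.filter fun y => hamming x y = 1).card = n := by
  rw [filter_hamming_eq_one, Finset.card_image_of_injective _ (flipBit_injective x)]
  simp

end Hamming

lemma sum_mutRLS {n : ℕ} (hn : 1 ≤ n) (x : BitStr n) : ∑ y, mutRLS x y = 1 := by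
  have hn' : (n : ℝ) ≠ 0 := by positivity
  simp only [mutRLS]
  rw [Finset.sum_ite, Finset.sum_const_zero, add_zero, Finset.sum_const,
    card_filter_hamming_eq_one, nsmul_eq_mul]
  field_simp

lemma firstBit_allOnes {n : ℕ} (hn : 0 < n) : firstBit (allOnes n) = true := by
  simp [firstBit, allOnes, hn]

/-- The bonus `w` paid for the first bit of `x'` outweighs any gain of fewer than `w` bits. -/
lemma fW_lt_of_hamming_lt {n : ℕ} {w : ℤ} {x' x y : BitStr n} (hx' : firstBit x' = true)
    (hx : firstBit x = false) (hy : (hamming x y : ℤ) < w) : fW w x y < fW w x' x := by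
  have := ones_le_ones_add_hamming x y
  simp only [fW, hx, hx', Bool.false_eq_true, if_false, if_true, add_zero]
  omega

section Absorbing

variable {n : ℕ} {m : BitStr n → BitStr n → ℝ} {w : ℤ} {s : TLState n}

lemma tlTrans_eq_of_forall_lt (hm : ∑ y, m s.2 y = 1)
    (hlt : ∀ y, m s.2 y ≠ 0 → fW w s.2 y < fW w s.1 s.2) (t : TLState n) :
    tlTrans m w s t = if t = s then 1 else 0 := by
  have accept : ∀ y, (if fW w s.1 s.2 ≤ fW w s.2 y ∧ t = (s.2, y) then m s.2 y else 0) = 0 :=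
    fun y => by
      split_ifs with h
      · by_contra hy
        exact (hlt y hy).not_ge h.1
      · rfl
  have reject : ∀ y, (if ¬ fW w s.1 s.2 ≤ fW w s.2 y then m s.2 y else 0) = m s.2 y :=
    fun y => by
      split_ifs with h
      · by_contra hy
        exact (hlt y (Ne.symm hy)).not_ge h
      · rfl
  simp only [tlTrans, accept, reject, Finset.sum_const_zero, hm, zero_add]

end Absorbing

section Hitting

variable {n : ℕ} {P : TLState n → TLState n → ℝ} {E : TLState n → Prop} {s : TLState n}

lemma hitWithin_eq_zero_of_absorbing (hP : ∀ t, P s t = if t = s then 1 else 0) (hs : ¬ E s)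
    (T : ℕ) : hitWithin P E T s = 0 := by
  induction T with
  | zero => simp [hitWithin, hs]
  | succ T ih => simp [hitWithin, hs, hP, ih]

lemma hitProb_eq_zero_of_absorbing (hP : ∀ t, P s t = if t = s then 1 else 0) (hs : ¬ E s) :
    hitProb P E s = 0 := by
  simp [hitProb, hitWithin_eq_zero_of_absorbing hP hs]

end Hitting

/-- For `w > 1`, a state `(x', x)` with first bit pattern
`(1, 0)` has strictly better fitness than any offspring obtained from `x` by
flipping exactly one bit, hence it is absorbing for the time-linkage RLS on
`f_w` and the RLS started there never reaches the global optimum. -/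
theorem stmt6 (n : ℕ) (hn : 1 ≤ n) (w : ℤ) (hw : 1 < w)
    (x' x : BitStr n) (hx' : firstBit x' = true) (hx : firstBit x = false) :
    (∀ y : BitStr n, hamming x y = 1 → fW w x y < fW w x' x) ∧
    (∀ t : TLState n, transRLS w (x', x) t = if t = (x', x) then 1 else 0) ∧
    hitProb (transRLS w) (OptPos (n := n)) (x', x) = 0 := by
  have worse : ∀ y : BitStr n, hamming x y = 1 → fW w x y < fW w x' x := fun y hy =>
    fW_lt_of_hamming_lt hx' hx (by rw [hy]; exact_mod_cast hw)
  have absorbing : ∀ t : TLState n, transRLS w (x', x) t = if t = (x', x) then 1 else 0 :=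
    tlTrans_eq_of_forall_lt (sum_mutRLS hn x) fun y hy =>
      worse y (ite_ne_right_iff.mp hy).1
  have not_opt : ¬ OptPos (x', x) := fun ⟨hall, _⟩ => by
    simp only at hall
    simp [hall, firstBit_allOnes hn] at hx
  exact ⟨worse, absorbing, hitProb_eq_zero_of_absorbing absorbing not_opt⟩
end

section
/- Let c ∈ (0, 1/2) and let w ∈ ℤ with −n ≤ w ≤ −1. Suppose the time-linkage RLS or (1+1) EA on f_w, without having reached the global optimum, arrives for the first time at a state in which the number of zero-bits of the current solution is below n^c, and that this state (x',x) satisfies x'_1 = 0 and x_1 = 1. Then with probability at least 1 − e/n^{2−c} − 1/n^{1−2c} − (n−1)·e^{−n^c/e}, Event I or Event II occurs at some (possibly later) time of the run. -/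
open scoped Classical BigOperators ENNReal

/-!
For the RLS, Event I holds already at the start. For the (1+1) EA write `w = -W`. From every
state the offspring `1^n` is accepted and has probability at least `n^{-n}`, so the chain almost
surely reaches Event I, Event II or the global optimum; it remains to bound the probability of
ever reaching the optimum. That probability is at most `min 1 ψ` for the superharmonic
potential `ψ = eaPotential W`: with `z` zero-bits in the current solution, `ψ = e z / n` for the
first-bit pattern `(1, 1)` and `ψ = e M / n + e M / n²`, `M = z - W`, for the pattern `(0, 1)`.
Superharmonicity weighs two mutation probabilities against each other: an accepted offspring
that loses the first bit flips it together with `k + 1` zero-bits (`k = 0`, resp. `k = W`),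
which has probability at most `C(z, k+1) n^{-k-2}`, while flipping exactly `k` zero-bits
(`k = 1`, resp. `k = W`) is accepted and has probability at least
`C(z, k) n^{-k} (1 - 1/n)^{n-1} ≥ C(z, k) n^{-k} / e`. At the start `z < n^c`, which gives
`ψ ≤ e / n^{2-c} + 1 / n^{1-2c}`.
-/

open Finset

variable {n : ℕ}

lemma firstBit_of_pos (hn : 0 < n) (x : BitStr n) : firstBit x = x ⟨0, hn⟩ := dif_pos hn

lemma pos_of_firstBit_eq_true {x : BitStr n} (hx : firstBit x = true) : 0 < n := by
  by_contra hn
  simp [firstBit, hn] at hx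

lemma ones_add_zeros (x : BitStr n) : ones x + zeros x = n := by
  simpa [ones, zeros] using card_filter_add_card_filter_not (s := univ) (fun i => x i = true)

lemma ones_allOnes : ones (allOnes n) = n := by
  simp [ones, allOnes]

lemma zeros_eq_zero_iff (x : BitStr n) : zeros x = 0 ↔ x = allOnes n := by
  simp [zeros, allOnes, funext_iff, filter_eq_empty_iff]

lemma two_le_of_firstBit_eq_true {x : BitStr n} (hx : firstBit x = true) (hne : x ≠ allOnes n) :
    2 ≤ n := by
  have hn := pos_of_firstBit_eq_true hx
  by_contra h
  refine hne (funext fun i => ?_)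
  rw [show i = ⟨0, hn⟩ from Fin.ext (by omega), ← firstBit_of_pos hn x, hx]
  rfl

lemma onesTail_add_one {x : BitStr n} (hx : firstBit x = true) : onesTail x + 1 = ones x := by
  have hn := pos_of_firstBit_eq_true hx
  have hmem : (⟨0, hn⟩ : Fin n) ∈ ({i | x i = true} : Finset (Fin n)) := by
    simpa [← firstBit_of_pos hn] using hx
  have herase : ({i | x i = true ∧ (i : ℕ) ≠ 0} : Finset (Fin n)) =
      ({i | x i = true} : Finset (Fin n)).erase ⟨0, hn⟩ := by
    ext i
    simp [and_comm, Fin.ext_iff]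
  rw [onesTail, ones, herase, card_erase_add_one hmem]

def flipAt (x : BitStr n) (S : Finset (Fin n)) : BitStr n := fun i => if i ∈ S then !x i else x i

lemma filter_ne_flipAt (x : BitStr n) (S : Finset (Fin n)) :
    ({i | x i ≠ flipAt x S i} : Finset (Fin n)) = S := by
  ext i
  by_cases hi : i ∈ S <;> simp [flipAt, hi]

lemma hamming_flipAt (x : BitStr n) (S : Finset (Fin n)) : hamming x (flipAt x S) = #S := by
  rw [hamming, filter_ne_flipAt]

lemma flipAt_injective (x : BitStr n) : Function.Injective (flipAt x) := fun S S' h => by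
  rw [← filter_ne_flipAt x S, h, filter_ne_flipAt]

lemma flipAt_filter_ne (x y : BitStr n) : flipAt x {i | x i ≠ y i} = y := by
  funext i
  cases hx : x i <;> cases hy : y i <;> simp [flipAt, hx, hy]

lemma zeros_flipAt_add {x : BitStr n} {S : Finset (Fin n)} (hS : ∀ i ∈ S, x i = false) :
    zeros (flipAt x S) + #S = zeros x := by
  have hsub : S ⊆ ({i | x i = false} : Finset (Fin n)) := fun i hi => by simpa using hS i hi
  have : ({i | flipAt x S i = false} : Finset (Fin n)) =
      ({i | x i = false} : Finset (Fin n)) \ S := by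
    ext i
    by_cases hi : i ∈ S <;> simp [flipAt, hi, hS]
  rw [zeros, this, card_sdiff_of_subset hsub, zeros, Nat.sub_add_cancel (card_le_card hsub)]

lemma mutEA_eq_prod (x y : BitStr n) :
    mutEA x y = ∏ i, if x i = y i then 1 - 1 / (n : ℝ) else 1 / n := by
  have hcard := card_filter_add_card_filter_not (s := univ) (fun i => x i = y i)
  rw [prod_ite, prod_const, prod_const, mutEA, hamming, mul_comm]
  congr 2
  simp only [card_univ, Fintype.card_fin, ← ne_eq] at hcard
  omega

lemma sum_mutEA_filter_forall_ne (x : BitStr n) (A : Finset (Fin n)) :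
    ∑ y with ∀ i ∈ A, y i ≠ x i, mutEA x y = (1 / n : ℝ) ^ #A := by
  -- `f i` is the `i`-th factor of the product law `mutEA x`, restricted to `y i ≠ x i` on `A`.
  set f : Fin n → Bool → ℝ := fun i b =>
    if i ∈ A ∧ b = x i then 0 else if x i = b then 1 - 1 / (n : ℝ) else 1 / n
  have hf : ∀ y : BitStr n,
      (if ∀ i ∈ A, y i ≠ x i then mutEA x y else 0) = ∏ i, f i (y i) := by
    intro y
    split_ifs with hy
    · rw [mutEA_eq_prod]
      exact prod_congr rfl fun i _ => by simp +contextual [f, hy i]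
    · push Not at hy
      obtain ⟨i, hi, hyi⟩ := hy
      exact (prod_eq_zero (mem_univ i) (by simp [f, hi, hyi])).symm
  have hcoord : ∀ i, ∑ b, f i b = if i ∈ A then 1 / (n : ℝ) else 1 := by
    intro i
    cases hxi : x i <;> by_cases hi : i ∈ A <;> simp [f, hxi, hi]
  rw [sum_filter, sum_congr rfl fun y _ => hf y, ← Fintype.prod_sum,
    prod_congr rfl fun i _ => hcoord i, prod_ite_mem, univ_inter, prod_const]

lemma mutEA_nonneg (x y : BitStr n) : 0 ≤ mutEA x y := by
  have := Nat.one_sub_one_div_cast_nonneg (α := ℝ) n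
  unfold mutEA
  positivity

lemma mutEA_mem_rowStochastic :
    (mutEA : BitStr n → BitStr n → ℝ) ∈ Matrix.rowStochastic ℝ (BitStr n) := by
  refine Matrix.mem_rowStochastic_iff_sum.mpr ⟨mutEA_nonneg, fun x => ?_⟩
  simpa using sum_mutEA_filter_forall_ne x ∅

lemma pow_le_mutEA (hn : 2 ≤ n) (x y : BitStr n) : (1 / n : ℝ) ^ n ≤ mutEA x y := by
  have hflip : (1 / n : ℝ) ≤ 1 - 1 / n := by
    rw [le_sub_iff_add_le, ← two_mul, mul_one_div, div_le_one (by positivity)]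
    exact_mod_cast hn
  have hle : hamming x y ≤ n := (card_filter_le _ _).trans_eq (by simp)
  calc (1 / n : ℝ) ^ n = (1 / n) ^ hamming x y * (1 / n) ^ (n - hamming x y) := by
        rw [← pow_add, Nat.add_sub_cancel' hle]
    _ ≤ mutEA x y := by unfold mutEA; gcongr

lemma sum_mutEA_le_of_cover {ι : Type*} (x : BitStr n) (B : Finset (BitStr n)) (I : Finset ι)
    (As : ι → Finset (Fin n)) (hcover : ∀ y ∈ B, ∃ i ∈ I, ∀ a ∈ As i, y a ≠ x a) :
    ∑ y ∈ B, mutEA x y ≤ ∑ i ∈ I, (1 / n : ℝ) ^ #(As i) := by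
  calc ∑ y ∈ B, mutEA x y
      ≤ ∑ y ∈ B, ∑ i ∈ I, if ∀ a ∈ As i, y a ≠ x a then mutEA x y else 0 := by
        refine sum_le_sum fun y hy => ?_
        obtain ⟨i, hi, hyi⟩ := hcover y hy
        exact (if_pos hyi).symm.le.trans (single_le_sum (f := fun i =>
          if ∀ a ∈ As i, y a ≠ x a then mutEA x y else 0)
          (fun _ _ => ite_nonneg (mutEA_nonneg x y) le_rfl) hi)
    _ = ∑ i ∈ I, ∑ y ∈ B with ∀ a ∈ As i, y a ≠ x a, mutEA x y := by
        rw [sum_comm]; simp_rw [sum_filter]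
    _ ≤ ∑ i ∈ I, (1 / n : ℝ) ^ #(As i) := by
        refine sum_le_sum fun i _ => ?_
        rw [← sum_mutEA_filter_forall_ne x (As i)]
        exact sum_le_sum_of_subset_of_nonneg (filter_subset_filter _ (subset_univ B))
          fun y _ _ => mutEA_nonneg x y

lemma choose_mul_le_sum_mutEA (x : BitStr n) (k : ℕ) :
    (zeros x).choose k * ((1 / n : ℝ) ^ k * (1 - 1 / n) ^ (n - k)) ≤
      ∑ y with zeros y + k ≤ zeros x, mutEA x y := by
  set Z : Finset (Fin n) := {i | x i = false}
  have hZ : ∀ S ∈ powersetCard k Z, ∀ i ∈ S, x i = false := fun S hS i hi => by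
    simpa [Z] using (mem_powersetCard.mp hS).1 hi
  calc (zeros x).choose k * ((1 / n : ℝ) ^ k * (1 - 1 / n) ^ (n - k))
      = ∑ S ∈ powersetCard k Z, mutEA x (flipAt x S) := by
        rw [sum_congr rfl fun S hS => by rw [mutEA, hamming_flipAt, (mem_powersetCard.mp hS).2],
          sum_const, card_powersetCard, nsmul_eq_mul]
        rfl
    _ = ∑ y ∈ (powersetCard k Z).image (flipAt x), mutEA x y :=
        (sum_image (flipAt_injective x).injOn).symm
    _ ≤ ∑ y with zeros y + k ≤ zeros x, mutEA x y := by
        refine sum_le_sum_of_subset_of_nonneg (fun y hy => ?_) fun y _ _ => mutEA_nonneg x y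
        obtain ⟨S, hS, rfl⟩ := mem_image.mp hy
        simp [← zeros_flipAt_add (hZ S hS), (mem_powersetCard.mp hS).2]

/-- Such an offspring flips the first bit of `x` and at least `k + 1` of its zero-bits. -/
lemma sum_mutEA_firstBit_false_le {x : BitStr n} (hx : firstBit x = true) (k : ℕ) :
    ∑ y with zeros y + k ≤ zeros x ∧ firstBit y = false, mutEA x y ≤
      (zeros x).choose (k + 1) * (1 / n : ℝ) ^ (k + 2) := by
  have hn := pos_of_firstBit_eq_true hx
  set i₀ : Fin n := ⟨0, hn⟩
  set Z : Finset (Fin n) := {i | x i = false}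
  have hxi₀ : x i₀ = true := (firstBit_of_pos hn x).symm.trans hx
  have hi₀ : ∀ S ∈ powersetCard (k + 1) Z, i₀ ∉ S := fun S hS hi => by
    simpa [Z, hxi₀] using (mem_powersetCard.mp hS).1 hi
  calc ∑ y with zeros y + k ≤ zeros x ∧ firstBit y = false, mutEA x y
      ≤ ∑ S ∈ powersetCard (k + 1) Z, (1 / n : ℝ) ^ #(insert i₀ S) := by
        refine sum_mutEA_le_of_cover x _ _ _ fun y hy => ?_
        simp only [mem_filter, mem_univ, true_and] at hy
        obtain ⟨hzy, hy₀⟩ := hy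
        replace hy₀ : y i₀ = false := by rwa [firstBit_of_pos hn] at hy₀
        have hcount : k + 1 ≤ #(Z.filter fun i => y i = true) := by
          have hsplit := card_filter_add_card_filter_not (s := Z) fun i => y i = true
          have hsub : insert i₀ (Z.filter fun i => ¬ y i = true) ⊆
              ({i | y i = false} : Finset (Fin n)) := by
            intro i hi
            rcases mem_insert.mp hi with rfl | hi
            · simpa using hy₀
            · simpa using (mem_filter.mp hi).2
          have hzeros := card_le_card hsub
          rw [card_insert_of_notMem (by simp [Z, hxi₀])] at hzeros
          have hZ : #Z = zeros x := rfl
          change _ ≤ zeros y at hzeros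
          omega
        obtain ⟨S, hSZt, hS⟩ := exists_subset_card_eq hcount
        refine ⟨S, mem_powersetCard.mpr ⟨hSZt.trans (filter_subset _ _), hS⟩,
          fun a ha => ?_⟩
        rcases mem_insert.mp ha with rfl | ha
        · simp [hy₀, hxi₀]
        · have := mem_filter.mp (hSZt ha)
          simp [this.2, (mem_filter.mp this.1).2]
    _ = (zeros x).choose (k + 1) * (1 / n : ℝ) ^ (k + 2) := by
        rw [sum_congr rfl fun S hS => by rw [card_insert_of_notMem (hi₀ S hS),
          (mem_powersetCard.mp hS).2], sum_const, card_powersetCard, nsmul_eq_mul]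
        rfl

section MarkovChain

variable {P : TLState n → TLState n → ℝ} {E A : TLState n → Prop}

lemma hitWithin_of_mem (T : ℕ) {s : TLState n} (hs : E s) : hitWithin P E T s = 1 := by
  cases T <;> simp [hitWithin, hs]

lemma hitWithin_succ_of_notMem (T : ℕ) {s : TLState n} (hs : ¬ E s) :
    hitWithin P E (T + 1) s = ∑ t, P s t * hitWithin P E T t := by
  simp [hitWithin, hs]

lemma hitWithin_nonneg (hP : ∀ s t, 0 ≤ P s t) (T : ℕ) (s : TLState n) :
    0 ≤ hitWithin P E T s := by
  induction T generalizing s with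
  | zero => unfold hitWithin; positivity
  | succ T ih =>
    by_cases hs : E s
    · simp [hitWithin_of_mem _ hs]
    · rw [hitWithin_succ_of_notMem T hs]
      exact sum_nonneg fun t _ => mul_nonneg (hP s t) (ih t)

lemma hitWithin_le_of_superharmonic (hP : ∀ s t, 0 ≤ P s t) {φ : TLState n → ℝ}
    (hφ0 : ∀ s, 0 ≤ φ s) (hφE : ∀ s, E s → 1 ≤ φ s)
    (hφ : ∀ s, ∑ t, P s t * φ t ≤ φ s)
    (T : ℕ) (s : TLState n) : hitWithin P E T s ≤ φ s := by
  induction T generalizing s with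
  | zero => by_cases hs : E s <;> simp [hitWithin, hs, hφE, hφ0]
  | succ T ih =>
    by_cases hs : E s
    · rw [hitWithin_of_mem _ hs]; exact hφE s hs
    · rw [hitWithin_succ_of_notMem T hs]
      exact (sum_le_sum fun t _ => mul_le_mul_of_nonneg_left (ih t) (hP s t)).trans (hφ s)

lemma hitWithin_le_one (hP : P ∈ Matrix.rowStochastic ℝ (TLState n)) (T : ℕ) (s : TLState n) :
    hitWithin P E T s ≤ 1 :=
  hitWithin_le_of_superharmonic (fun _ _ => Matrix.nonneg_of_mem_rowStochastic hP)
    (φ := fun _ => 1) (fun _ => zero_le_one) (fun _ _ => le_rfl)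
    (fun s => by simp [Matrix.sum_row_of_mem_rowStochastic hP s]) T s

lemma hitWithin_le_hitProb (hP : P ∈ Matrix.rowStochastic ℝ (TLState n)) (T : ℕ)
    (s : TLState n) : hitWithin P E T s ≤ hitProb P E s :=
  le_ciSup (f := fun T => hitWithin P E T s)
    ⟨1, by rintro _ ⟨T', rfl⟩; exact hitWithin_le_one hP T' s⟩ T

lemma one_le_hitProb (hP : P ∈ Matrix.rowStochastic ℝ (TLState n)) {s : TLState n} (hs : E s) :
    1 ≤ hitProb P E s :=
  (hitWithin_of_mem 0 hs).symm.le.trans (hitWithin_le_hitProb hP 0 s)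

lemma hitWithin_or_le (hP : ∀ s t, 0 ≤ P s t) (T : ℕ) (s : TLState n) :
    hitWithin P (fun t => E t ∨ A t) T s ≤ hitWithin P E T s + hitWithin P A T s := by
  induction T generalizing s with
  | zero => by_cases hE : E s <;> by_cases hA : A s <;> simp [hitWithin, hE, hA]
  | succ T ih =>
    by_cases hs : E s ∨ A s
    · rw [hitWithin_of_mem (E := fun t => E t ∨ A t) _ hs]
      rcases hs with hs | hs
      · linarith [hitWithin_of_mem (P := P) (T + 1) hs, hitWithin_nonneg (E := A) hP (T + 1) s]
      · linarith [hitWithin_of_mem (P := P) (T + 1) hs, hitWithin_nonneg (E := E) hP (T + 1) s]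
    · rw [hitWithin_succ_of_notMem (E := fun t => E t ∨ A t) T hs,
        hitWithin_succ_of_notMem T (fun h => hs (Or.inl h)),
        hitWithin_succ_of_notMem T (fun h => hs (Or.inr h)), ← sum_add_distrib]
      exact sum_le_sum fun t _ => (mul_le_mul_of_nonneg_left (ih t) (hP s t)).trans_eq (mul_add ..)

lemma one_sub_pow_le_hitWithin (hP : P ∈ Matrix.rowStochastic ℝ (TLState n)) {q : ℝ}
    (hq : q ≤ 1) (hreach : ∀ s, ¬ E s → ∃ t, E t ∧ q ≤ P s t) (T : ℕ)
    (s : TLState n) :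
    1 - (1 - q) ^ T ≤ hitWithin P E T s := by
  have hP0 : ∀ s t, 0 ≤ P s t := fun _ _ => Matrix.nonneg_of_mem_rowStochastic hP
  induction T generalizing s with
  | zero => simpa using hitWithin_nonneg hP0 0 s
  | succ T ih =>
    by_cases hs : E s
    · rw [hitWithin_of_mem _ hs]
      linarith [pow_nonneg (sub_nonneg.2 hq) (T + 1)]
    obtain ⟨t₀, ht₀, hqt₀⟩ := hreach s hs
    rw [hitWithin_succ_of_notMem T hs]
    set L := 1 - (1 - q) ^ T
    have hsum : ∑ t, P s t * hitWithin P E T t = L + ∑ t, P s t * (hitWithin P E T t - L) := by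
      simp [mul_sub, sum_sub_distrib, ← sum_mul, Matrix.sum_row_of_mem_rowStochastic hP s]
    have ht₀sum : P s t₀ * (1 - L) ≤ ∑ t, P s t * (hitWithin P E T t - L) := by
      rw [← hitWithin_of_mem (P := P) T ht₀]
      exact single_le_sum (f := fun t => P s t * (hitWithin P E T t - L))
        (fun t _ => mul_nonneg (hP0 s t) (sub_nonneg.2 (ih t))) (mem_univ t₀)
    have hL : 1 - L = (1 - q) ^ T := by ring
    calc 1 - (1 - q) ^ (T + 1) = L + q * (1 - L) := by rw [hL]; ring
      _ ≤ L + P s t₀ * (1 - L) := by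
        rw [hL]; gcongr
      _ ≤ ∑ t, P s t * hitWithin P E T t := by linarith

/-- The chain reaches `E ∨ A` almost surely and reaches `A` with probability at most `φ s`. -/
lemma one_sub_le_hitProb (hP : P ∈ Matrix.rowStochastic ℝ (TLState n)) {φ : TLState n → ℝ}
    (hφ0 : ∀ s, 0 ≤ φ s) (hφA : ∀ s, A s → 1 ≤ φ s)
    (hφ : ∀ s, ∑ t, P s t * φ t ≤ φ s) {q : ℝ} (hq0 : 0 < q) (hq1 : q ≤ 1)
    (hreach : ∀ s, ¬ (E s ∨ A s) → ∃ t, (E t ∨ A t) ∧ q ≤ P s t) (s : TLState n) :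
    1 - φ s ≤ hitProb P E s := by
  have hP0 : ∀ s t, 0 ≤ P s t := fun _ _ => Matrix.nonneg_of_mem_rowStochastic hP
  have hT : ∀ T : ℕ, 1 - (1 - q) ^ T - φ s ≤ hitProb P E s := fun T => by
    linarith [one_sub_pow_le_hitWithin hP hq1 hreach T s, hitWithin_or_le (E := E) (A := A) hP0 T s,
      hitWithin_le_of_superharmonic hP0 hφ0 hφA hφ T s, hitWithin_le_hitProb (E := E) hP T s]
  have hlim : Filter.Tendsto (fun T : ℕ => 1 - (1 - q) ^ T - φ s) Filter.atTop
      (nhds (1 - φ s)) := by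
    simpa using ((tendsto_pow_atTop_nhds_zero_of_lt_one (by linarith) (by linarith)).const_sub
      1).sub_const (φ s)
  exact le_of_tendsto' hlim hT

end MarkovChain

section TimeLinkage

variable {m : BitStr n → BitStr n → ℝ}

lemma sum_tlTrans_mul (w : ℤ) (u : TLState n) (g : TLState n → ℝ) :
    ∑ t, tlTrans m w u t * g t =
      ∑ y with fW w u.1 u.2 ≤ fW w u.2 y, m u.2 y * g (u.2, y) +
        (∑ y with ¬ fW w u.1 u.2 ≤ fW w u.2 y, m u.2 y) * g u := by
  simp only [tlTrans, add_mul, sum_add_distrib, sum_mul, ite_mul, zero_mul, ite_and]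
  rw [sum_comm]
  simp [sum_filter]

lemma tlTrans_mem_rowStochastic (hm : m ∈ Matrix.rowStochastic ℝ (BitStr n)) (w : ℤ) :
    tlTrans m w ∈ Matrix.rowStochastic ℝ (TLState n) := by
  have hm0 : ∀ x y, 0 ≤ m x y := fun _ _ => Matrix.nonneg_of_mem_rowStochastic hm
  refine Matrix.mem_rowStochastic_iff_sum.mpr ⟨fun u t => ?_, fun u => ?_⟩
  · have hsum : ∀ p : BitStr n → Prop, [DecidablePred p] →
        0 ≤ ∑ y, if p y then m u.2 y else 0 := fun _ _ =>
      sum_nonneg fun y _ => ite_nonneg (hm0 _ _) le_rfl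
    exact add_nonneg (hsum _) (ite_nonneg (hsum _) le_rfl)
  · have h := sum_tlTrans_mul (m := m) w u 1
    simp only [Pi.one_apply, mul_one] at h
    rw [h, sum_filter_add_sum_filter_not, Matrix.sum_row_of_mem_rowStochastic hm]

lemma tlTrans_superharmonic (hm : m ∈ Matrix.rowStochastic ℝ (BitStr n)) (w : ℤ)
    (u : TLState n) {g : TLState n → ℝ}
    (h : ∑ y with fW w u.1 u.2 ≤ fW w u.2 y, m u.2 y * g (u.2, y) ≤
      (∑ y with fW w u.1 u.2 ≤ fW w u.2 y, m u.2 y) * g u) :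
    ∑ t, tlTrans m w u t * g t ≤ g u := by
  have hsplit := sum_filter_add_sum_filter_not univ (fun y => fW w u.1 u.2 ≤ fW w u.2 y) (m u.2)
  rw [Matrix.sum_row_of_mem_rowStochastic hm] at hsplit
  rw [sum_tlTrans_mul]
  linear_combination h + g u * hsplit

lemma le_tlTrans (hm : ∀ x y, 0 ≤ m x y) {w : ℤ} {u : TLState n} {y : BitStr n}
    (hy : fW w u.1 u.2 ≤ fW w u.2 y) : m u.2 y ≤ tlTrans m w u (u.2, y) := by
  refine le_add_of_le_of_nonneg ?_
    (ite_nonneg (sum_nonneg fun _ _ => ite_nonneg (hm _ _) le_rfl) le_rfl)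
  refine le_trans (by simp [hy]) (single_le_sum (f := fun y' =>
    if fW w u.1 u.2 ≤ fW w u.2 y' ∧ (u.2, y) = (u.2, y') then m u.2 y' else 0)
    (fun _ _ => ite_nonneg (hm _ _) le_rfl) (mem_univ y))

lemma mutRLS_mem_rowStochastic (hn : 0 < n) :
    (mutRLS : BitStr n → BitStr n → ℝ) ∈ Matrix.rowStochastic ℝ (BitStr n) := by
  refine Matrix.mem_rowStochastic_iff_sum.mpr
    ⟨fun x y => by unfold mutRLS; positivity, fun x => ?_⟩
  have himage : ({y | hamming x y = 1} : Finset (BitStr n)) = univ.image fun i => flipAt x {i} := by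
    ext y
    simp only [mem_filter, mem_univ, true_and, mem_image]
    constructor
    · intro hy
      obtain ⟨i, hi⟩ := card_eq_one.mp hy
      exact ⟨i, by rw [← hi, flipAt_filter_ne]⟩
    · rintro ⟨i, rfl⟩
      simp [hamming_flipAt]
  have hinj : Function.Injective fun i : Fin n => flipAt x {i} :=
    (flipAt_injective x).comp singleton_injective
  rw [show (fun y => mutRLS x y) = fun y => if hamming x y = 1 then (1 / n : ℝ) else 0 from rfl,
    ← sum_filter, himage, sum_const, card_image_of_injective _ hinj]
  simp [hn.ne']

lemma fW_le_fW_iff_of_true {w : ℤ} {x' x : BitStr n} (hx' : firstBit x' = true)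
    (hx : firstBit x = true) (y : BitStr n) : fW w x' x ≤ fW w x y ↔ zeros y ≤ zeros x := by
  have := ones_add_zeros x
  have := ones_add_zeros y
  simp only [fW, hx', hx, if_true]
  omega

lemma fW_le_fW_iff_of_false {W : ℕ} {x' x : BitStr n} (hx' : firstBit x' = false)
    (hx : firstBit x = true) (y : BitStr n) :
    fW (-W) x' x ≤ fW (-W) x y ↔ zeros y + W ≤ zeros x := by
  have := ones_add_zeros x
  have := ones_add_zeros y
  simp only [fW, hx', hx, if_true, Bool.false_eq_true, if_false]
  omega

end TimeLinkage

lemma eu_pos : 0 < eu := Real.exp_pos 1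

lemma one_le_eu_mul_pow (n : ℕ) : 1 ≤ eu * (1 - 1 / n : ℝ) ^ (n - 1) := by
  have hprod : ((1 - 1 / n : ℝ) * (1 + ((n - 1 : ℕ) : ℝ)⁻¹)) ^ (n - 1) = 1 := by
    rcases Nat.lt_or_ge n 2 with hn | hn
    · rw [Nat.sub_eq_zero_of_le (by omega), pow_zero]
    · obtain ⟨m, rfl⟩ : ∃ m, n = m + 1 := ⟨n - 1, by omega⟩
      have hm : (m : ℝ) ≠ 0 := by exact_mod_cast (by omega : m ≠ 0)
      rw [Nat.add_sub_cancel, ← one_pow m]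
      congr 1
      push_cast
      field_simp
      ring
  calc (1 : ℝ) = (1 - 1 / n) ^ (n - 1) * (1 + ((n - 1 : ℕ) : ℝ)⁻¹) ^ (n - 1) := by
        rw [← mul_pow, hprod]
    _ ≤ (1 - 1 / n) ^ (n - 1) * eu := by
        gcongr
        · exact pow_nonneg (Nat.one_sub_one_div_cast_nonneg n) _
        · exact Real.one_add_inv_pow_le_exp
    _ = eu * (1 - 1 / n) ^ (n - 1) := mul_comm _ _

lemma sum_mul_min_one_le {α : Type*} {S : Finset α} {a f : α → ℝ} {c : ℝ}
    (ha : ∀ i ∈ S, 0 ≤ a i) (h : ∑ i ∈ S, a i * f i ≤ (∑ i ∈ S, a i) * c) :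
    ∑ i ∈ S, a i * min 1 (f i) ≤ (∑ i ∈ S, a i) * min 1 c := by
  rcases le_total 1 c with hc | hc
  · rw [min_eq_left hc, mul_one]
    exact sum_le_sum fun i hi => mul_le_of_le_one_right (ha i hi) (min_le_left _ _)
  · rw [min_eq_right hc]
    exact (sum_le_sum fun i hi => mul_le_mul_of_nonneg_left (min_le_right _ _) (ha i hi)).trans h

section Potential

variable (W : ℕ)

/-- Where the pattern of first bits is `(0, 1)`, `zeros u.2 - W` is truncated subtraction: it
vanishes on Event I, where no offspring is accepted any more. -/
noncomputable def eaPotential (u : TLState n) : ℝ :=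
  if firstBit u.2 = false then 1
  else if firstBit u.1 = true then eu * zeros u.2 / n
  else if u.2 = allOnes n then 1
  else eu * (zeros u.2 - W : ℕ) / n + eu * (zeros u.2 - W : ℕ) / n ^ 2

lemma eaPotential_nonneg (u : TLState n) : 0 ≤ eaPotential W u := by
  have := eu_pos
  unfold eaPotential
  split_ifs <;> positivity

lemma one_le_eaPotential {u : TLState n} (hu : OptNeg u) : 1 ≤ eaPotential W u := by
  obtain ⟨h2, h1⟩ := hu
  unfold eaPotential
  split_ifs <;> simp_all

lemma eaPotential_le {x : BitStr n} (hx : firstBit x = true) (y : BitStr n) :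
    eaPotential W (x, y) ≤ (if firstBit y = false then 1 else 0) + eu * zeros y / n := by
  have := eu_pos
  cases hy : firstBit y
  · simp only [eaPotential, hy, if_true]
    linarith [show 0 ≤ eu * zeros y / n by positivity]
  · simp [eaPotential, hy, hx]

lemma sum_mutEA_mul_eaPotential_le {x : BitStr n} (hx : firstBit x = true) (S : Finset (BitStr n)) :
    ∑ y ∈ S, mutEA x y * eaPotential W (x, y) ≤
      ∑ y ∈ S with firstBit y = false, mutEA x y +
        eu / n * ∑ y ∈ S, mutEA x y * zeros y := by
  rw [sum_filter, mul_sum, ← sum_add_distrib]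
  refine sum_le_sum fun y _ => (mul_le_mul_of_nonneg_left (eaPotential_le W hx y)
    (mutEA_nonneg x y)).trans_eq ?_
  split_ifs <;> ring

lemma sum_mutEA_mul_eaPotential_le_of_zeros_le {x : BitStr n} (hx : firstBit x = true) :
    ∑ y with zeros y ≤ zeros x, mutEA x y * eaPotential W (x, y) ≤
      (∑ y with zeros y ≤ zeros x, mutEA x y) * (eu * zeros x / n) := by
  have hbad : ∑ y ∈ {y | zeros y ≤ zeros x} with firstBit y = false, mutEA x y ≤
      zeros x / (n : ℝ) ^ 2 := by
    simpa [filter_filter, div_eq_mul_inv] using sum_mutEA_firstBit_false_le hx 0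
  have hmass : ∑ y with zeros y + 1 ≤ zeros x, mutEA x y ≤
      ∑ y with zeros y ≤ zeros x, mutEA x y * (zeros x - zeros y) := by
    refine (sum_le_sum fun y hy => ?_).trans (sum_le_sum_of_subset_of_nonneg
      ?_ fun y hy _ => mul_nonneg (mutEA_nonneg x y) ?_)
    · have : (zeros y : ℝ) + 1 ≤ zeros x := by exact_mod_cast (mem_filter.mp hy).2
      exact le_mul_of_one_le_right (mutEA_nonneg x y) (by linarith)
    · intro y; simp only [mem_filter, mem_univ, true_and]; omega
    · have : (zeros y : ℝ) ≤ zeros x := by exact_mod_cast (mem_filter.mp hy).2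
      linarith
  have hflip : zeros x / (n : ℝ) ^ 2 ≤
      eu / n * ∑ y with zeros y ≤ zeros x, mutEA x y * (zeros x - zeros y) := by
    have hlow := choose_mul_le_sum_mutEA x 1
    rw [Nat.choose_one_right, pow_one] at hlow
    calc zeros x / (n : ℝ) ^ 2 ≤ zeros x / (n : ℝ) ^ 2 * (eu * (1 - 1 / n) ^ (n - 1)) :=
          le_mul_of_one_le_right (by positivity) (one_le_eu_mul_pow n)
      _ = eu / n * (zeros x * (1 / n * (1 - 1 / n) ^ (n - 1))) := by ring
      _ ≤ eu / n * ∑ y with zeros y ≤ zeros x, mutEA x y * (zeros x - zeros y) := by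
          have := eu_pos
          gcongr
          exact hlow.trans hmass
  calc ∑ y with zeros y ≤ zeros x, mutEA x y * eaPotential W (x, y)
      ≤ ∑ y ∈ {y | zeros y ≤ zeros x} with firstBit y = false, mutEA x y +
          eu / n * ∑ y with zeros y ≤ zeros x, mutEA x y * zeros y :=
        sum_mutEA_mul_eaPotential_le W hx _
    _ ≤ eu / n * ∑ y with zeros y ≤ zeros x, mutEA x y * (zeros x - zeros y) +
          eu / n * ∑ y with zeros y ≤ zeros x, mutEA x y * zeros y := by linarith
    _ = (∑ y with zeros y ≤ zeros x, mutEA x y) * (eu * zeros x / n) := by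
        rw [← mul_add, ← sum_add_distrib, sum_mul, mul_sum]
        exact sum_congr rfl fun y _ => by ring

lemma sum_mutEA_mul_eaPotential_le_of_zeros_add_le (hW : 1 ≤ W) {x : BitStr n}
    (hx : firstBit x = true) :
    ∑ y with zeros y + W ≤ zeros x, mutEA x y * eaPotential W (x, y) ≤
      (∑ y with zeros y + W ≤ zeros x, mutEA x y) *
        (eu * (zeros x - W : ℕ) / n + eu * (zeros x - W : ℕ) / n ^ 2) := by
  set M := zeros x - W
  set acc := ∑ y with zeros y + W ≤ zeros x, mutEA x y
  have := eu_pos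
  have hbad : ∑ y ∈ {y | zeros y + W ≤ zeros x} with firstBit y = false, mutEA x y ≤
      (zeros x).choose (W + 1) * (1 / n : ℝ) ^ (W + 2) := by
    simpa [filter_filter] using sum_mutEA_firstBit_false_le hx W
  have hchoose : ((zeros x).choose (W + 1) : ℝ) ≤ M * (zeros x).choose W := by
    have h := Nat.choose_succ_right_eq (zeros x) W
    exact_mod_cast (Nat.le_mul_of_pos_right _ W.succ_pos).trans (h.trans_le (mul_comm _ _).le)
  have hlow : (zeros x).choose W * ((1 / n : ℝ) ^ W * (1 - 1 / n) ^ (n - 1)) ≤ acc := by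
    refine le_trans (mul_le_mul_of_nonneg_left (mul_le_mul_of_nonneg_left ?_ (by positivity))
      (by positivity)) (choose_mul_le_sum_mutEA x W)
    exact pow_le_pow_of_le_one (Nat.one_sub_one_div_cast_nonneg n)
      (Nat.one_sub_one_div_cast_le_one n) (by omega)
  have hzeros :
      eu / n * ∑ y with zeros y + W ≤ zeros x, mutEA x y * zeros y ≤ eu * M / n * acc := by
    calc eu / n * ∑ y with zeros y + W ≤ zeros x, mutEA x y * zeros y
        ≤ eu / n * ∑ y with zeros y + W ≤ zeros x, mutEA x y * M := by
          gcongr with y hy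
          · exact mutEA_nonneg x y
          · exact_mod_cast (by simp only [mem_filter, mem_univ, true_and] at hy; omega)
      _ = eu * M / n * acc := by rw [← sum_mul]; ring
  calc ∑ y with zeros y + W ≤ zeros x, mutEA x y * eaPotential W (x, y)
      ≤ ∑ y ∈ {y | zeros y + W ≤ zeros x} with firstBit y = false, mutEA x y +
          eu / n * ∑ y with zeros y + W ≤ zeros x, mutEA x y * zeros y :=
        sum_mutEA_mul_eaPotential_le W hx _
    _ ≤ M * (zeros x).choose W * (1 / n : ℝ) ^ (W + 2) + eu * M / n * acc := by
        gcongr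
        exact hbad.trans (by gcongr)
    _ ≤ M * (zeros x).choose W * (1 / n : ℝ) ^ (W + 2) * (eu * (1 - 1 / n) ^ (n - 1)) +
          eu * M / n * acc := by
        gcongr ?_ + _
        exact le_mul_of_one_le_right (by positivity) (one_le_eu_mul_pow n)
    _ = eu * M / n ^ 2 * ((zeros x).choose W * ((1 / n : ℝ) ^ W * (1 - 1 / n) ^ (n - 1))) +
          eu * M / n * acc := by ring
    _ ≤ eu * M / n ^ 2 * acc + eu * M / n * acc := by gcongr
    _ = acc * (eu * M / n + eu * M / n ^ 2) := by ring

lemma eaPotential_superharmonic (hW : 1 ≤ W) (u : TLState n) :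
    ∑ t, transEA (-W) u t * min 1 (eaPotential W t) ≤ min 1 (eaPotential W u) := by
  refine tlTrans_superharmonic mutEA_mem_rowStochastic _ u ?_
  by_cases hbig : 1 ≤ eaPotential W u
  · rw [min_eq_left hbig, mul_one]
    exact sum_le_sum fun y _ => mul_le_of_le_one_right (mutEA_nonneg _ _) (min_le_left _ _)
  have hx : firstBit u.2 = true := by
    cases h : firstBit u.2
    · simp [eaPotential, h] at hbig
    · rfl
  refine sum_mul_min_one_le (fun _ _ => mutEA_nonneg _ _) ?_
  cases hx' : firstBit u.1
  · have hne : u.2 ≠ allOnes n := fun h => by simp [eaPotential, hx', h] at hbig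
    simp_rw [fW_le_fW_iff_of_false hx' hx]
    simpa [eaPotential, hx, hx', hne] using
      sum_mutEA_mul_eaPotential_le_of_zeros_add_le W hW hx
  · simp_rw [fW_le_fW_iff_of_true hx' hx]
    simpa [eaPotential, hx, hx'] using sum_mutEA_mul_eaPotential_le_of_zeros_le W hx

end Potential

lemma exists_transEA_ge (hn : 2 ≤ n) {W : ℕ} (u : TLState n)
    (hu : ¬ ((EventIEA (-W) u ∨ EventII u) ∨ OptNeg u)) :
    ∃ t, ((EventIEA (-W) t ∨ EventII t) ∨ OptNeg t) ∧
      (1 / n : ℝ) ^ n ≤ transEA (-W) u t := by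
  refine ⟨(u.2, allOnes n), ?_, (pow_le_mutEA hn _ _).trans (le_tlTrans mutEA_nonneg ?_)⟩
  · cases h : firstBit u.2
    · exact Or.inr ⟨rfl, h⟩
    · exact Or.inl (Or.inr ⟨h, rfl⟩)
  have hones := ones_add_zeros u.2
  cases h2 : firstBit u.2 <;> cases h1 : firstBit u.1 <;>
    simp only [fW, ones_allOnes, h1, h2, if_true, Bool.false_eq_true, if_false] <;> try omega
  have hne : u.2 ≠ allOnes n := fun h => hu (Or.inr ⟨h, h1⟩)
  have htail := onesTail_add_one h2
  have : ¬ (-(W : ℤ) + n ≤ onesTail u.2) := fun h => hu (Or.inl (Or.inl ⟨h1, h2, hne, h⟩))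
  omega

lemma one_sub_eaPotential_le_hitProb (hn : 2 ≤ n) {W : ℕ} (hW : 1 ≤ W) (s : TLState n) :
    1 - eaPotential W s ≤ hitProb (transEA (-W)) (fun t => EventIEA (-W) t ∨ EventII t) s := by
  refine le_trans ?_ (one_sub_le_hitProb (tlTrans_mem_rowStochastic mutEA_mem_rowStochastic _)
    (φ := fun t => min 1 (eaPotential W t)) (fun t => le_min zero_le_one (eaPotential_nonneg W t))
    (fun t ht => le_min le_rfl (one_le_eaPotential W ht)) (eaPotential_superharmonic W hW)
    (by positivity) (pow_le_one₀ (by positivity) (by simp [Nat.cast_inv_le_one]))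
    (exists_transEA_ge hn) s)
  gcongr
  exact min_le_right _ _

lemma eu_mul_le_sq {M T : ℝ} (h : M + 1 ≤ T) : eu * M ≤ T ^ 2 := by
  have he : eu < 4 := by have := Real.exp_one_lt_d9; unfold eu; linarith
  nlinarith [sq_nonneg (T - eu / 2), mul_pos eu_pos (sub_pos.2 he), eu_pos]

lemma eaPotential_le_rpow {W : ℕ} (hW : 1 ≤ W) {c : ℝ} {s : TLState n}
    (h1 : firstBit s.1 = false) (h2 : firstBit s.2 = true) (hne : s.2 ≠ allOnes n)
    (hzeros : (zeros s.2 : ℝ) < n ^ c) :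
    eaPotential W s ≤ eu / n ^ (2 - c) + 1 / n ^ (1 - 2 * c) := by
  have hn : (0 : ℝ) < n := by exact_mod_cast pos_of_firstBit_eq_true h2
  have := eu_pos
  have hM : ((zeros s.2 - W : ℕ) : ℝ) + 1 ≤ n ^ c := by
    have : zeros s.2 ≠ 0 := (zeros_eq_zero_iff _).not.mpr hne
    have : ((zeros s.2 - W : ℕ) : ℝ) + 1 ≤ zeros s.2 := by
      exact_mod_cast (by omega : zeros s.2 - W + 1 ≤ zeros s.2)
    linarith
  have hsq : 1 / (n : ℝ) ^ (1 - 2 * c) = ((n : ℝ) ^ c) ^ 2 / n := by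
    rw [Real.rpow_sub hn, Real.rpow_one, mul_comm 2 c, Real.rpow_mul hn.le, Real.rpow_two]
    field_simp
  have hlin : eu / (n : ℝ) ^ (2 - c) = eu * (n : ℝ) ^ c / n ^ 2 := by
    rw [Real.rpow_sub hn, Real.rpow_two]
    field_simp
  simp only [eaPotential, h1, h2, hne, if_false, Bool.true_eq_false, Bool.false_eq_true]
  rw [hsq, hlin, add_comm]
  gcongr
  · linarith
  · exact eu_mul_le_sq hM

theorem stmt11_general (n : ℕ) (c : ℝ)
    (w : ℤ) (hw2 : w ≤ -1)
    (s : TLState n) (hzeros : (zeros s.2 : ℝ) < (n : ℝ) ^ c)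
    (hnopt : ¬ OptNeg s)
    (h1 : firstBit s.1 = false) (h2 : firstBit s.2 = true) :
    hitProb (transEA w) (fun t => EventIEA w t ∨ EventII t) s ≥
      1 - eu / (n : ℝ) ^ (2 - c) - 1 / (n : ℝ) ^ (1 - 2 * c) -
        ((n : ℝ) - 1) * Real.exp (-(n : ℝ) ^ c / eu) ∧
    hitProb (transRLS w) (fun t => EventIRLS t ∨ EventII t) s ≥
      1 - eu / (n : ℝ) ^ (2 - c) - 1 / (n : ℝ) ^ (1 - 2 * c) -
        ((n : ℝ) - 1) * Real.exp (-(n : ℝ) ^ c / eu) := by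
  have hne : s.2 ≠ allOnes n := fun h => hnopt ⟨h, h1⟩
  have hn := two_le_of_firstBit_eq_true h2 hne
  have hn1 : (1 : ℝ) ≤ n := by exact_mod_cast (by omega : 1 ≤ n)
  have := eu_pos
  have herr : 0 ≤ eu / (n : ℝ) ^ (2 - c) ∧ 0 ≤ 1 / (n : ℝ) ^ (1 - 2 * c) ∧
      0 ≤ ((n : ℝ) - 1) * Real.exp (-(n : ℝ) ^ c / eu) :=
    ⟨by positivity, by positivity, mul_nonneg (by linarith) (Real.exp_pos _).le⟩
  obtain ⟨W, rfl⟩ : ∃ W : ℕ, w = -W := ⟨(-w).toNat, by omega⟩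
  have hW : 1 ≤ W := by omega
  constructor
  · have hhit := one_sub_eaPotential_le_hitProb hn hW s
    have hpot := eaPotential_le_rpow hW h1 h2 hne hzeros
    linarith
  · have hhit := one_le_hitProb (P := transRLS (-W))
      (tlTrans_mem_rowStochastic (mutRLS_mem_rowStochastic (by omega)) _)
      (E := fun t => EventIRLS t ∨ EventII t) (Or.inl ⟨h1, h2, hne⟩)
    linarith

/-- Let `c ∈ (0, 1/2)` and `-n ≤ w ≤ -1`. If the
time-linkage RLS or (1+1) EA on `f_w` is at a non-optimal state `(x', x)` with
fewer than `n^c` zero-bits in the current solution and with first bit pattern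
`(0, 1)` (as is the situation when it first arrives below `n^c` zeros without
having reached the global optimum), then with probability at least
`1 - e/n^{2-c} - 1/n^{1-2c} - (n-1)·e^{-n^c/e}`, Event I or Event II occurs at
some (possibly later) time. -/
theorem stmt11 (n : ℕ) (hn : 1 ≤ n) (c : ℝ) (hc : c ∈ Set.Ioo (0 : ℝ) (1 / 2))
    (w : ℤ) (hw1 : -(n : ℤ) ≤ w) (hw2 : w ≤ -1)
    (s : TLState n) (hzeros : (zeros s.2 : ℝ) < (n : ℝ) ^ c)
    (hnopt : ¬ OptNeg s)
    (h1 : firstBit s.1 = false) (h2 : firstBit s.2 = true) :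
    hitProb (transEA w) (fun t => EventIEA w t ∨ EventII t) s ≥
      1 - eu / (n : ℝ) ^ (2 - c) - 1 / (n : ℝ) ^ (1 - 2 * c) -
        ((n : ℝ) - 1) * Real.exp (-(n : ℝ) ^ c / eu) ∧
    hitProb (transRLS w) (fun t => EventIRLS t ∨ EventII t) s ≥
      1 - eu / (n : ℝ) ^ (2 - c) - 1 / (n : ℝ) ^ (1 - 2 * c) -
        ((n : ℝ) - 1) * Real.exp (-(n : ℝ) ^ c / eu) :=
  stmt11_general n c w hw2 s hzeros hnopt h1 h2
end
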